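/- Consider the vector field f(x,y,v) = (−Γ(x,y)(1−y)x, (Υ(x,y)(1−y) − v)y, (b(Υ(x,y)(1−y) − v) + Γ(x,y)(2 − (6+a)(1−y)))v) on ℝ³, where Γ, Υ ∈ C¹. At a fixed point (x_c, 1, 0), the Jacobian ∇f(x_c,1,0) has eigenvalues 0, −Υ(x_c,1), and 2Γ(x_c,1), with eigenvectors (1,0,0), (−x_c Γ(x_c,1), Υ(x_c,1), 0), and (−x_c/2, −1, 2Γ(x_c,1)+Υ(x_c,1)) respectively. -/

import Mathlib

/-!
At the fixed point `(x_c, 1, 0)` every occurrence of `Γ` and `Υ` in the vector field is multiplied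
by a factor vanishing there (`1 - y`, `v`, or the bracket of the `y`-equation). Hence the
derivative only sees the values `Γ(x_c, 1)` and `Υ(x_c, 1)`: the Jacobian is the upper triangular
matrix `[[0, x_c Γ, 0], [0, -Υ, -1], [0, 0, 2Γ]]`, and the eigenvectors are checked directly.
-/

open Set

/-- The vector field of the 3-dimensional autonomous system. -/
noncomputable def elasticField (Γ Υ : ℝ → ℝ → ℝ) (a b : ℝ)
    (p : ℝ × ℝ × ℝ) : ℝ × ℝ × ℝ :=
  (-Γ p.1 p.2.1 * (1 - p.2.1) * p.1,
   (Υ p.1 p.2.1 * (1 - p.2.1) - p.2.2) * p.2.1,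
   (b * (Υ p.1 p.2.1 * (1 - p.2.1) - p.2.2)
      + Γ p.1 p.2.1 * (2 - (6 + a) * (1 - p.2.1))) * p.2.2)

open Asymptotics Filter Topology

theorem hasFDerivAt_mul_of_continuousAt_of_eq_zero {𝕜 E : Type*} [NontriviallyNormedField 𝕜]
    [NormedAddCommGroup E] [NormedSpace 𝕜 E] {f g : E → 𝕜} {g' : E →L[𝕜] 𝕜} {p : E}
    (hf : ContinuousAt f p) (hg : HasFDerivAt g g' p) (hgp : g p = 0) :
    HasFDerivAt (fun x => f x * g x) (f p • g') p := by
  have hsmall : (fun x => f x - f p) =o[𝓝 p] (fun _ => (1 : ℝ)) :=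
    (isLittleO_one_iff ℝ).2 (tendsto_sub_nhds_zero_iff.2 hf)
  have hcross : (fun x => (f x - f p) * (g x - g p)) =o[𝓝 p] (fun x => x - p) := by
    simpa using (hsmall.mul_isBigO hg.isBigO_sub.norm_right).norm_right
  -- as `g p = 0`, the remainder `f x * g x - f p * g' (x - p)` splits as
  -- `f p * (g x - g p - g' (x - p)) + (f x - f p) * (g x - g p)`
  refine HasFDerivAt.of_isLittleO <| ((hg.isLittleO.const_mul_left (f p)).add hcross).congr_left
    fun x => ?_
  simp only [_root_.smul_apply, smul_eq_mul, hgp]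
  ring

noncomputable def elasticFieldJacobianAtCenter (xc γ υ : ℝ) : ℝ × ℝ × ℝ →L[ℝ] ℝ × ℝ × ℝ :=
  let dy := (ContinuousLinearMap.fst ℝ ℝ ℝ).comp (ContinuousLinearMap.snd ℝ ℝ (ℝ × ℝ))
  let dv := (ContinuousLinearMap.snd ℝ ℝ ℝ).comp (ContinuousLinearMap.snd ℝ ℝ (ℝ × ℝ))
  ((xc * γ) • dy).prod (((-υ) • dy - dv).prod ((2 * γ) • dv))

@[simp]
theorem elasticFieldJacobianAtCenter_apply (xc γ υ : ℝ) (p : ℝ × ℝ × ℝ) :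
    elasticFieldJacobianAtCenter xc γ υ p
      = (xc * γ * p.2.1, -υ * p.2.1 - p.2.2, 2 * γ * p.2.2) := by
  simp [elasticFieldJacobianAtCenter]

theorem hasFDerivAt_elasticField_center {Γ Υ : ℝ → ℝ → ℝ} (a b : ℝ) {xc : ℝ}
    (hΓ : ContinuousAt (fun q : ℝ × ℝ => Γ q.1 q.2) (xc, 1))
    (hΥ : ContinuousAt (fun q : ℝ × ℝ => Υ q.1 q.2) (xc, 1)) :
    HasFDerivAt (elasticField Γ Υ a b) (elasticFieldJacobianAtCenter xc (Γ xc 1) (Υ xc 1))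
      (xc, 1, 0) := by
  set p₀ : ℝ × ℝ × ℝ := (xc, 1, 0)
  have hproj : ContinuousAt (fun p : ℝ × ℝ × ℝ => (p.1, p.2.1)) p₀ := by fun_prop
  have hΓ' : ContinuousAt (fun p : ℝ × ℝ × ℝ => Γ p.1 p.2.1) p₀ := hΓ.comp_of_eq hproj rfl
  have hΥ' : ContinuousAt (fun p : ℝ × ℝ × ℝ => Υ p.1 p.2.1) p₀ := hΥ.comp_of_eq hproj rfl
  have hy := (hasFDerivAt_fst (𝕜 := ℝ) (p := p₀.2)).comp p₀ hasFDerivAt_snd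
  have hv := (hasFDerivAt_snd (𝕜 := ℝ) (p := p₀.2)).comp p₀ hasFDerivAt_snd
  have hw := hy.const_sub 1
  have hΥw := hasFDerivAt_mul_of_continuousAt_of_eq_zero hΥ' hw (by simp [p₀])
  have h₁ := hasFDerivAt_mul_of_continuousAt_of_eq_zero (hΓ'.neg.mul continuous_fst.continuousAt)
    hw (by simp [p₀])
  have h₂ := hasFDerivAt_mul_of_continuousAt_of_eq_zero
    (continuous_fst.comp continuous_snd).continuousAt (hΥw.sub hv) (by simp [p₀])
  have h₃ := hasFDerivAt_mul_of_continuousAt_of_eq_zero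
    (((hΥw.sub hv).continuousAt.const_mul b).add
      (hΓ'.mul ((hw.continuousAt.const_mul (6 + a)).const_sub 2))) hv (by simp [p₀])
  refine ((h₁.prodMk (h₂.prodMk h₃)).congr_fderiv ?_).congr_of_eventuallyEq
    (Eventually.of_forall fun p => ?_)
  · ext <;> simp [p₀] <;> ring
  · simp [elasticField]
    constructor <;> ring

theorem linearization_at_center_fixed_point_general
    (Γ Υ : ℝ → ℝ → ℝ) (a b xc : ℝ)
    (hΓ : ContDiff ℝ 1 (fun p : ℝ × ℝ => Γ p.1 p.2))
    (hΥ : ContDiff ℝ 1 (fun p : ℝ × ℝ => Υ p.1 p.2)) :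
    elasticField Γ Υ a b (xc, 1, 0) = 0 ∧
    (fderiv ℝ (elasticField Γ Υ a b) (xc, 1, 0)) (1, 0, 0)
      = (0 : ℝ) • ((1 : ℝ), (0 : ℝ), (0 : ℝ)) ∧
    (fderiv ℝ (elasticField Γ Υ a b) (xc, 1, 0)) (-xc * Γ xc 1, Υ xc 1, 0)
      = (-Υ xc 1) • (-xc * Γ xc 1, Υ xc 1, (0 : ℝ)) ∧
    (fderiv ℝ (elasticField Γ Υ a b) (xc, 1, 0)) (-xc / 2, -1, 2 * Γ xc 1 + Υ xc 1)
      = (2 * Γ xc 1) • (-xc / 2, (-1 : ℝ), 2 * Γ xc 1 + Υ xc 1) := by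
  rw [(hasFDerivAt_elasticField_center a b hΓ.continuous.continuousAt
    hΥ.continuous.continuousAt).fderiv]
  refine ⟨by simp [elasticField], ?_, ?_, ?_⟩ <;>
    simp only [elasticFieldJacobianAtCenter_apply, Prod.smul_mk, smul_eq_mul] <;> ring_nf

/-- Spectral decomposition of the linearization at the fixed point (x_c, 1, 0). -/
theorem linearization_at_center_fixed_point
    (Γ Υ : ℝ → ℝ → ℝ) (a b xc : ℝ) (hxc : 0 < xc)
    (hΓ : ContDiff ℝ 1 (fun p : ℝ × ℝ => Γ p.1 p.2))
    (hΥ : ContDiff ℝ 1 (fun p : ℝ × ℝ => Υ p.1 p.2)) :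
    elasticField Γ Υ a b (xc, 1, 0) = 0 ∧
    (fderiv ℝ (elasticField Γ Υ a b) (xc, 1, 0)) (1, 0, 0)
      = (0 : ℝ) • ((1 : ℝ), (0 : ℝ), (0 : ℝ)) ∧
    (fderiv ℝ (elasticField Γ Υ a b) (xc, 1, 0)) (-xc * Γ xc 1, Υ xc 1, 0)
      = (-Υ xc 1) • (-xc * Γ xc 1, Υ xc 1, (0 : ℝ)) ∧
    (fderiv ℝ (elasticField Γ Υ a b) (xc, 1, 0)) (-xc / 2, -1, 2 * Γ xc 1 + Υ xc 1)
      = (2 * Γ xc 1) • (-xc / 2, (-1 : ℝ), 2 * Γ xc 1 + Υ xc 1) :=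
  linearization_at_center_fixed_point_general Γ Υ a b xc hΓ hΥ
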